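/- For every natural number n, Σ_{k=0}^{a(n)} b(k) = a(n)² + a(n) + n + 1, where a and b enumerate the odious and evil numbers in increasing order. -/

import Mathlib

/-- Sum of base-`d` digits of `n`. -/
def sdig (d n : ℕ) : ℕ := (Nat.digits d n).sum

/-- `t_d(n)`: base-`d` digit sum of `n`, reduced mod `d`. -/
def td (d n : ℕ) : ℕ := sdig d n % d

/-- `a_{j,d}(n)`: n-th natural (0-indexed, increasing) with base-`d` digit sum ≡ j mod d. -/
noncomputable def agen (d j n : ℕ) : ℕ := Nat.nth (fun k => sdig d k % d = j) n

/-- n-th odious number (binary digit sum odd), 0-indexed increasing. -/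
noncomputable def odious (n : ℕ) : ℕ := Nat.nth (fun k => (Nat.digits 2 k).sum % 2 = 1) n

/-- n-th evil number (binary digit sum even), 0-indexed increasing. -/
noncomputable def evil (n : ℕ) : ℕ := Nat.nth (fun k => (Nat.digits 2 k).sum % 2 = 0) n

/-- Thue–Morse sequence: parity of the binary digit sum. -/
def tm (n : ℕ) : ℕ := (Nat.digits 2 n).sum % 2


/-!
Digit sums obey `s(2k) = s(k)` and `s(2k+1) = s(k) + 1`, so each pair `{2k, 2k+1}` contains exactly
one evil and one odious number. Hence `b(k) = 2k + t(k)` with `t` the Thue–Morse sequence, and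
`∑_{k ≤ m} b(k) = m(m+1) + #{odious numbers ≤ m}`; for `m = a(n)` that count is `n + 1`.
-/

open Nat Finset

section PairedPredicate

variable {p : ℕ → Prop}

theorem infinite_ofPred_of_forall_iff_not (hp : ∀ k, p (2 * k + 1) ↔ ¬ p (2 * k)) :
    (Set.ofPred p).Infinite := by
  refine Set.infinite_of_forall_exists_gt fun a => ?_
  by_cases h : p (2 * (a + 1))
  · exact ⟨2 * (a + 1), h, by omega⟩
  · exact ⟨2 * (a + 1) + 1, (hp _).2 h, by omega⟩

variable [DecidablePred p]

theorem count_two_mul_of_forall_iff_not (hp : ∀ k, p (2 * k + 1) ↔ ¬ p (2 * k)) (k : ℕ) :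
    count p (2 * k) = k := by
  induction k with
  | zero => simp
  | succ k ih =>
    rw [show 2 * (k + 1) = 2 * k + 1 + 1 by ring, count_succ, count_succ, ih]
    by_cases h : p (2 * k) <;> simp [h, hp k]

theorem nth_eq_of_forall_iff_not (hp : ∀ k, p (2 * k + 1) ↔ ¬ p (2 * k)) (k : ℕ) :
    nth p k = 2 * k + if p (2 * k) then 0 else 1 := by
  by_cases h : p (2 * k)
  · simpa [h, count_two_mul_of_forall_iff_not hp] using nth_count h
  · have h' : p (2 * k + 1) := (hp k).2 h
    have hcount : count p (2 * k + 1) = k := by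
      simp [count_succ, h, count_two_mul_of_forall_iff_not hp]
    simpa [h, hcount] using nth_count h'

end PairedPredicate

theorem tm_lt_two (n : ℕ) : tm n < 2 := Nat.mod_lt _ two_pos

theorem tm_two_mul_add {k b : ℕ} (hb : b < 2) : tm (2 * k + b) = (b + tm k) % 2 := by
  rcases Nat.eq_zero_or_pos k with rfl | hk
  · interval_cases b <;> simp [tm]
  · rw [tm, add_comm, digits_add 2 one_lt_two b k hb (Or.inr hk.ne'), List.sum_cons,
      Nat.add_mod, tm]
    simp

theorem tm_two_mul (k : ℕ) : tm (2 * k) = tm k := by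
  simpa [Nat.mod_eq_of_lt (tm_lt_two k)] using tm_two_mul_add (k := k) two_pos

theorem tm_two_mul_add_one (k : ℕ) : tm (2 * k + 1) = 1 - tm k := by
  have := tm_lt_two k
  rw [tm_two_mul_add one_lt_two]
  omega

theorem tm_two_mul_add_one_eq_iff (j k : ℕ) (hj : j < 2) :
    tm (2 * k + 1) = j ↔ ¬ tm (2 * k) = j := by
  have := tm_lt_two k
  rw [tm_two_mul_add_one, tm_two_mul]
  omega

theorem evil_eq (k : ℕ) : evil k = 2 * k + tm k := by
  have h := nth_eq_of_forall_iff_not (p := fun n => tm n = 0)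
    (fun k => tm_two_mul_add_one_eq_iff 0 k two_pos) k
  have := tm_lt_two k
  rw [evil, show (fun n => (digits 2 n).sum % 2 = 0) = fun n => tm n = 0 from rfl, h,
    tm_two_mul]
  split_ifs <;> omega

theorem sum_range_tm (m : ℕ) : ∑ k ∈ range m, tm k = count (fun n => tm n = 1) m := by
  induction m with
  | zero => simp
  | succ m ih =>
    obtain h | h : tm m = 0 ∨ tm m = 1 := by have := tm_lt_two m; omega
    all_goals simp [sum_range_succ, count_succ, ih, h]

theorem count_odious_succ (n : ℕ) : count (fun k => tm k = 1) (odious n + 1) = n + 1 :=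
  count_nth_succ_of_infinite
    (infinite_ofPred_of_forall_iff_not fun k => tm_two_mul_add_one_eq_iff 1 k one_lt_two) n

theorem stmt12 (n : ℕ) :
    ∑ k ∈ Finset.range (odious n + 1), evil k = (odious n) ^ 2 + odious n + n + 1 := by
  set m := odious n
  have hgauss : ∑ k ∈ range (m + 1), 2 * k = (m + 1) * m := by
    rw [← mul_sum, mul_comm, sum_range_id_mul_two, Nat.add_sub_cancel]
  calc ∑ k ∈ range (m + 1), evil k
      = ∑ k ∈ range (m + 1), 2 * k + ∑ k ∈ range (m + 1), tm k := by
        simp only [evil_eq, sum_add_distrib]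
    _ = (m + 1) * m + (n + 1) := by rw [hgauss, sum_range_tm, count_odious_succ]
    _ = m ^ 2 + m + n + 1 := by ring
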